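/- (Derandomized CSSP bound, Osinsky's guarantee.) Let A ∈ ℝ^{m×n} and let V ∈ ℝ^{n×r} have orthonormal columns, with r ≤ n. Then there exist distinct indices j_1,…,j_r ∈ {1,…,n} such that the r×r matrix Vᵀ E_J is invertible and ‖A − A E_J (Vᵀ E_J)⁻¹ Vᵀ‖_F² ≤ (r+1) · ‖A − A V Vᵀ‖_F². -/

import Mathlib

open Matrix BigOperators

/-- One step of the ARP recursion: project out the `i`-th row of `W`
(convention: leave `W` unchanged if that row is zero). -/
noncomputable def arpStep {n r : ℕ} (W : Matrix (Fin n) (Fin r) ℝ) (i : Fin n) :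
    Matrix (Fin n) (Fin r) ℝ :=
  if W i = 0 then W
  else W * (1 - (∑ l, (W i l) ^ 2)⁻¹ • Matrix.of fun a b => W i a * W i b)

/-- The ARP iterates `V_k`. -/
noncomputable def arpIter {n r : ℕ} (V : Matrix (Fin n) (Fin r) ℝ) (j : Fin r → Fin n) :
    ℕ → Matrix (Fin n) (Fin r) ℝ
  | 0 => V
  | k + 1 => if h : k < r then arpStep (arpIter V j k) (j ⟨k, h⟩) else arpIter V j k

/-- The ARP weight `w(j) = ∏_{k=1}^r ‖v_k‖²/(r-k+1)`. -/
noncomputable def arpWeight {n r : ℕ} (V : Matrix (Fin n) (Fin r) ℝ) (j : Fin r → Fin n) : ℝ :=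
  ∏ k : Fin r, (∑ l, (arpIter V j k.val (j k) l) ^ 2) / ((r : ℝ) - (k.val : ℝ))

/-- The matrix `E_J` whose `k`-th column is the `j_k`-th standard basis vector of ℝⁿ. -/
def EJ {n k : ℕ} (j : Fin k → Fin n) : Matrix (Fin n) (Fin k) ℝ :=
  Matrix.of fun i l => if i = j l then 1 else 0

/-- Squared Frobenius norm. -/
def frobSq {m n : ℕ} (A : Matrix (Fin m) (Fin n) ℝ) : ℝ := ∑ i, ∑ j, (A i j) ^ 2

/-!
Weight each selection `j` by `det(V_J)²`, where `V_J` is the rows `J` of `V`; by Cauchy–Binet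
these weights sum to `r! det(VᵀV) = r!`. With `B = A - AVVᵀ` we have `BV = 0`, and for invertible `VᵀE_J` the residual is
`B - (B E_J (VᵀE_J)⁻¹) Vᵀ`, whose two parts are Frobenius-orthogonal. Clearing the inverse,
`det(V_J)² ‖B E_J (VᵀE_J)⁻¹‖² = ‖B E_J adj(VᵀE_J)‖²`, and by Cramer's rule the entries of the
latter are minors of `V` with one column replaced by a row `b` of `B`. Since `b ⊥ range V`,
Cauchy–Binet sums the squares of these minors over `j` to `r! ‖b‖²`. So the weighted average of
`‖B E_J (VᵀE_J)⁻¹‖²` is `r ‖B‖²`, and some `j` of nonzero weight is no worse than the average.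
-/

namespace Matrix

variable {R : Type*} [CommRing R] {m n : Type*} [Fintype m] [DecidableEq m]

theorem injective_of_det_submatrix_ne_zero {V : Matrix n m R} {j : m → n}
    (hdet : (V.submatrix j id).det ≠ 0) : Function.Injective j := by
  intro a b hab
  by_contra hne
  exact hdet (det_zero_of_row_eq hne (congrArg V hab))

theorem mul_adjugate_transpose_submatrix_apply {ι : Type*} (B : Matrix ι n R) (V : Matrix n m R)
    (j : m → n) (i : ι) (k : m) :
    (B.submatrix id j * adjugate (V.submatrix j id)ᵀ) i k
      = ((V.updateCol k (B i)).submatrix j id).det := by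
  have hcol : (V.updateCol k (B i)).submatrix j id = (V.submatrix j id).updateCol k (B i ∘ j) := by
    ext a p
    simp [updateCol_apply]
  rw [hcol, ← cramer_apply, cramer_eq_adjugate_mulVec, ← adjugate_transpose]
  simp [mul_apply, mulVec, dotProduct, mul_comm]

variable [Fintype n]

theorem det_transpose_mul_eq_sum (A B : Matrix n m R) :
    (Aᵀ * B).det = ∑ f : m → n, (∏ k, A (f k) k) * (B.submatrix f id).det := by
  have hrows : Aᵀ * B = of fun k => ∑ i, A i k • B i := by
    ext k l
    simp [mul_apply]
  have hexpand := (detRowAlternating (R := R) (n := m)).toMultilinearMap.map_sum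
    (fun k i => A i k • B i)
  simp only [AlternatingMap.coe_multilinearMap] at hexpand
  rw [hrows, det]
  change detRowAlternating (fun k => ∑ i, A i k • B i) = _
  rw [hexpand]
  refine Finset.sum_congr rfl fun f _ => ?_
  have hsmul := (detRowAlternating (R := R) (n := m)).toMultilinearMap.map_smul_univ
    (fun k => A (f k) k) (fun k => B (f k))
  simp only [AlternatingMap.coe_multilinearMap] at hsmul
  rw [hsmul, smul_eq_mul]
  rfl

/-- Cauchy–Binet, summed over all maps `m → n`: non-injective ones contribute `0`, and each
injective one is counted once per ordering of its image. -/
theorem sum_det_submatrix_mul_det_submatrix (A B : Matrix n m R) :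
    ∑ f : m → n, (A.submatrix f id).det * (B.submatrix f id).det
      = (Fintype.card m).factorial * (Aᵀ * B).det := by
  have hperm (σ : Equiv.Perm m) :
      ∑ f : m → n, (∏ i, A (f (σ i)) i) * (B.submatrix f id).det
        = Equiv.Perm.sign σ * (Aᵀ * B).det := by
    rw [det_transpose_mul_eq_sum, Finset.mul_sum]
    refine (Fintype.sum_equiv (Equiv.arrowCongr σ (Equiv.refl n)) _ _ fun g => ?_).symm
    change _ = (∏ i, A (g (σ.symm (σ i))) i) * ((B.submatrix g id).submatrix σ.symm id).det
    rw [det_permute, Equiv.Perm.sign_symm]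
    simp only [Equiv.symm_apply_apply]
    ring
  calc ∑ f : m → n, (A.submatrix f id).det * (B.submatrix f id).det
      = ∑ f : m → n, ∑ σ : Equiv.Perm m,
          Equiv.Perm.sign σ * ((∏ i, A (f (σ i)) i) * (B.submatrix f id).det) := by
        refine Finset.sum_congr rfl fun f _ => ?_
        simp only [det_apply' (A.submatrix f id), Finset.sum_mul, submatrix_apply, id, mul_assoc]
    _ = ∑ σ : Equiv.Perm m, Equiv.Perm.sign σ *
          ∑ f : m → n, (∏ i, A (f (σ i)) i) * (B.submatrix f id).det := by
        rw [Finset.sum_comm]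
        simp only [Finset.mul_sum]
    _ = ∑ _σ : Equiv.Perm m, (Aᵀ * B).det := by
        refine Finset.sum_congr rfl fun σ _ => ?_
        rw [hperm, ← mul_assoc, ← Int.cast_mul, ← Units.val_mul, Int.units_mul_self,
          Units.val_one, Int.cast_one, one_mul]
    _ = (Fintype.card m).factorial * (Aᵀ * B).det := by
        simp [Finset.card_univ, Fintype.card_perm]

theorem sum_det_submatrix_sq (A : Matrix n m R) :
    ∑ f : m → n, (A.submatrix f id).det ^ 2 = (Fintype.card m).factorial * (Aᵀ * A).det := by
  simp only [sq, sum_det_submatrix_mul_det_submatrix]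

theorem det_gram_updateCol_of_vecMul_eq_zero {V : Matrix n m R} (hV : Vᵀ * V = 1) {b : n → R}
    (hb : b ᵥ* V = 0) (k : m) :
    ((V.updateCol k b)ᵀ * V.updateCol k b).det = b ⬝ᵥ b := by
  have hgram :
      (V.updateCol k b)ᵀ * V.updateCol k b = diagonal (Function.update 1 k (b ⬝ᵥ b)) := by
    ext p q
    have hVV : ∑ a, V a p * V a q = if p = q then 1 else 0 := by
      simpa [mul_apply, one_apply] using congrFun (congrFun hV p) q
    have hbV (c : m) : ∑ a, b a * V a c = 0 := congrFun hb c
    have hVb (c : m) : ∑ a, V a c * b a = 0 := by simpa only [mul_comm] using hbV c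
    by_cases hp : p = k <;> by_cases hq : q = k <;> subst_vars <;>
      simp [*, Ne.symm, mul_apply, diagonal_apply, dotProduct]
  rw [hgram, det_diagonal, Finset.prod_update_of_mem (Finset.mem_univ k)]
  simp

theorem sub_mul_inv_mul_transpose_eq {ι : Type*} (A : Matrix ι n R) (V E : Matrix n m R)
    (hE : IsUnit (Vᵀ * E).det) :
    A - A * E * (Vᵀ * E)⁻¹ * Vᵀ
      = (A - A * V * Vᵀ) - (A - A * V * Vᵀ) * E * (Vᵀ * E)⁻¹ * Vᵀ := by
  have hproj : A * V * Vᵀ * E * (Vᵀ * E)⁻¹ * Vᵀ = A * V * Vᵀ := by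
    rw [Matrix.mul_assoc (A * V), Matrix.mul_assoc (A * V), mul_nonsing_inv _ hE, Matrix.mul_one]
  rw [Matrix.sub_mul, Matrix.sub_mul, Matrix.sub_mul, hproj]
  abel

end Matrix

theorem exists_ne_zero_and_le_mul_of_sum_le {ι R : Type*} [Fintype ι] [Semiring R] [LinearOrder R]
    [IsStrictOrderedRing R] {w g : ι → R} {c : R} (hg : ∀ i, 0 ≤ g i) (hw : ∑ i, w i ≠ 0)
    (h : ∑ i, g i ≤ c * ∑ i, w i) : ∃ i, w i ≠ 0 ∧ g i ≤ c * w i := by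
  by_contra! hlarge
  obtain ⟨i₀, -, hi₀⟩ := Finset.exists_ne_zero_of_sum_ne_zero hw
  have hlt : ∑ i, c * w i < ∑ i, g i := by
    refine Finset.sum_lt_sum (fun i _ => ?_) ⟨i₀, Finset.mem_univ _, hlarge i₀ hi₀⟩
    by_cases hwi : w i = 0
    · simpa [hwi] using hg i
    · exact (hlarge i hwi).le
  rw [← Finset.mul_sum] at hlt
  exact hlt.not_ge h

section

variable {m n r : ℕ}

theorem frobSq_nonneg (A : Matrix (Fin m) (Fin n) ℝ) : 0 ≤ frobSq A :=
  Finset.sum_nonneg fun _ _ => Finset.sum_nonneg fun _ _ => sq_nonneg _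

theorem frobSq_eq_trace (A : Matrix (Fin m) (Fin n) ℝ) : frobSq A = (A * Aᵀ).trace := by
  simp [frobSq, trace, mul_apply, sq]

theorem frobSq_smul (c : ℝ) (A : Matrix (Fin m) (Fin n) ℝ) : frobSq (c • A) = c ^ 2 * frobSq A := by
  simp [frobSq, Finset.mul_sum, mul_pow]

theorem frobSq_sub_mul_transpose {B : Matrix (Fin m) (Fin n) ℝ} {V : Matrix (Fin n) (Fin r) ℝ}
    (hV : Vᵀ * V = 1) (hBV : B * V = 0) (C : Matrix (Fin m) (Fin r) ℝ) :
    frobSq (B - C * Vᵀ) = frobSq B + frobSq C := by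
  have hcross : B * (C * Vᵀ)ᵀ = 0 := by
    rw [transpose_mul, transpose_transpose, ← Matrix.mul_assoc, hBV, Matrix.zero_mul]
  have hcross' : C * Vᵀ * Bᵀ = 0 := by
    rw [Matrix.mul_assoc, ← transpose_mul, hBV, transpose_zero, Matrix.mul_zero]
  have hgram : C * Vᵀ * (C * Vᵀ)ᵀ = C * Cᵀ := by
    rw [transpose_mul, transpose_transpose, Matrix.mul_assoc, ← Matrix.mul_assoc Vᵀ, hV,
      Matrix.one_mul]
  simp only [frobSq_eq_trace, transpose_sub, Matrix.sub_mul, Matrix.mul_sub, hcross, hcross',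
    hgram, trace_add, sub_zero, zero_sub, sub_neg_eq_add]

theorem mul_EJ {k : ℕ} (X : Matrix (Fin m) (Fin n) ℝ) (j : Fin k → Fin n) :
    X * EJ j = X.submatrix id j := by
  ext i l
  simp [EJ, mul_apply]

theorem transpose_mul_EJ {k : ℕ} (V : Matrix (Fin n) (Fin r) ℝ) (j : Fin k → Fin n) :
    Vᵀ * EJ j = (V.submatrix j id)ᵀ := by
  ext a l
  simp [EJ, mul_apply]

theorem det_transpose_mul_EJ (V : Matrix (Fin n) (Fin r) ℝ) (j : Fin r → Fin n) :
    (Vᵀ * EJ j).det = (V.submatrix j id).det := by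
  rw [transpose_mul_EJ, det_transpose]

theorem sum_frobSq_mul_EJ_mul_adjugate {B : Matrix (Fin m) (Fin n) ℝ}
    {V : Matrix (Fin n) (Fin r) ℝ} (hV : Vᵀ * V = 1) (hBV : B * V = 0) :
    ∑ j : Fin r → Fin n, frobSq (B * EJ j * adjugate (Vᵀ * EJ j))
      = r * r.factorial * frobSq B := by
  have hrow (i : Fin m) : B i ᵥ* V = 0 := by rw [← mul_apply_eq_vecMul, hBV]; rfl
  have hentry (j : Fin r → Fin n) (i : Fin m) (k : Fin r) :
      (B * EJ j * adjugate (Vᵀ * EJ j)) i k = ((V.updateCol k (B i)).submatrix j id).det := by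
    rw [transpose_mul_EJ, mul_EJ, mul_adjugate_transpose_submatrix_apply]
  calc ∑ j : Fin r → Fin n, frobSq (B * EJ j * adjugate (Vᵀ * EJ j))
      = ∑ i, ∑ k, ∑ j : Fin r → Fin n, ((V.updateCol k (B i)).submatrix j id).det ^ 2 := by
        simp only [frobSq, hentry]
        rw [Finset.sum_comm]
        simp only [Finset.sum_comm (γ := Fin r → Fin n)]
    _ = ∑ i, ∑ _k : Fin r, r.factorial * (B i ⬝ᵥ B i) := by
        simp only [sum_det_submatrix_sq, det_gram_updateCol_of_vecMul_eq_zero hV (hrow _),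
          Fintype.card_fin]
    _ = r * r.factorial * frobSq B := by
        simp [frobSq, dotProduct, sq, Finset.mul_sum, mul_assoc]

theorem exists_det_ne_zero_frobSq_le {B : Matrix (Fin m) (Fin n) ℝ}
    {V : Matrix (Fin n) (Fin r) ℝ} (hV : Vᵀ * V = 1) (hBV : B * V = 0) :
    ∃ j : Fin r → Fin n, (V.submatrix j id).det ≠ 0 ∧
      frobSq (B * EJ j * (Vᵀ * EJ j)⁻¹) ≤ r * frobSq B := by
  have hweights : ∑ j : Fin r → Fin n, (V.submatrix j id).det ^ 2 = r.factorial := by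
    simp [sum_det_submatrix_sq, hV]
  obtain ⟨j, hwj, hgj⟩ := exists_ne_zero_and_le_mul_of_sum_le (c := r * frobSq B)
    (w := fun j => (V.submatrix j id).det ^ 2) (fun _ => frobSq_nonneg _)
    (by rw [hweights]; positivity)
    (le_of_eq (by rw [sum_frobSq_mul_EJ_mul_adjugate hV hBV, hweights]; ring))
  have hdet : (V.submatrix j id).det ≠ 0 := pow_ne_zero_iff two_ne_zero |>.mp hwj
  refine ⟨j, hdet, ?_⟩
  rw [inv_def, Matrix.mul_smul, frobSq_smul, det_transpose_mul_EJ, Ring.inverse_eq_inv, inv_pow,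
    inv_mul_le_iff₀ (by positivity)]
  linarith

end

theorem derandomized_cssp_bound_general {m n r : ℕ}
    (A : Matrix (Fin m) (Fin n) ℝ)
    (V : Matrix (Fin n) (Fin r) ℝ) (hV : Vᵀ * V = 1) :
    ∃ j : Fin r → Fin n, Function.Injective j ∧ IsUnit (Vᵀ * EJ j).det ∧
      frobSq (A - A * EJ j * (Vᵀ * EJ j)⁻¹ * Vᵀ) ≤
        ((r : ℝ) + 1) * frobSq (A - A * V * Vᵀ) := by
  set B := A - A * V * Vᵀ
  have hBV : B * V = 0 := by
    rw [Matrix.sub_mul, Matrix.mul_assoc (A * V), hV, Matrix.mul_one, sub_self]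
  obtain ⟨j, hdet, hj⟩ := exists_det_ne_zero_frobSq_le hV hBV
  have hunit : IsUnit (Vᵀ * EJ j).det := by
    rwa [det_transpose_mul_EJ, isUnit_iff_ne_zero]
  refine ⟨j, injective_of_det_submatrix_ne_zero hdet, hunit, ?_⟩
  rw [sub_mul_inv_mul_transpose_eq A V (EJ j) hunit, frobSq_sub_mul_transpose hV hBV]
  linarith

/-- derandomized CSSP bound, Osinsky's guarantee: there exist distinct
indices `j_1,…,j_r` with `Vᵀ E_J` invertible and
`‖A − A E_J (Vᵀ E_J)⁻¹ Vᵀ‖_F² ≤ (r+1)‖A − AVVᵀ‖_F²`. -/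
theorem derandomized_cssp_bound {m n r : ℕ} (hrn : r ≤ n)
    (A : Matrix (Fin m) (Fin n) ℝ)
    (V : Matrix (Fin n) (Fin r) ℝ) (hV : Vᵀ * V = 1) :
    ∃ j : Fin r → Fin n, Function.Injective j ∧ IsUnit (Vᵀ * EJ j).det ∧
      frobSq (A - A * EJ j * (Vᵀ * EJ j)⁻¹ * Vᵀ) ≤
        ((r : ℝ) + 1) * frobSq (A - A * V * Vᵀ) :=
  derandomized_cssp_bound_general A V hV
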